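/- arXiv:2105.03524 — 2 statements merged into one kernel-verified Lean document; each statement's English description precedes it below -/
import Mathlib

section
/- Let (a_n) be the Somos-5 sequence of positive integers. For every n ≥ 5, gcd(a_n*a_{n-3}, a_{n-1}*a_{n-2}) = 1. -/
/-!
Four consecutive terms of a Somos-5 sequence are pairwise coprime. Write the recurrence as
`a (m+5) * a m = a (m+4) * a (m+1) + a (m+3) * a (m+2)`: a common factor of `a (m+5)` and a
term `r` among `a (m+2), a (m+3), a (m+4)` divides `r` and the remaining product on the right,
whose factors are both coprime to `r` by induction.
-/

theorem IsCoprime.of_mul_eq_add_mul {R : Type*} [CommRing R] {p q r s t u : R}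
    (h : p * q = r * s + t * u) (ht : IsCoprime r t) (hu : IsCoprime r u) : IsCoprime r p := by
  have htu : IsCoprime r (p * q + r * -s) := by
    rw [h]; convert ht.mul_right hu using 1; ring
  exact htu.of_add_mul_left_right.of_mul_right_left

section Window

variable {R : Type*} [CommRing R] (a : ℕ → R)

def WindowCoprime (m : ℕ) : Prop :=
  IsCoprime (a m) (a (m + 1)) ∧ IsCoprime (a m) (a (m + 2)) ∧ IsCoprime (a m) (a (m + 3)) ∧
    IsCoprime (a (m + 1)) (a (m + 2)) ∧ IsCoprime (a (m + 1)) (a (m + 3)) ∧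
    IsCoprime (a (m + 2)) (a (m + 3))

variable {a}

theorem WindowCoprime.succ {m : ℕ}
    (hrec : a (m + 5) * a m = a (m + 4) * a (m + 1) + a (m + 3) * a (m + 2))
    (h : WindowCoprime a (m + 1)) : WindowCoprime a (m + 2) := by
  obtain ⟨c12, c13, -, c23, c24, c34⟩ := h
  have c25 : IsCoprime (a (m + 2)) (a (m + 5)) :=
    IsCoprime.of_mul_eq_add_mul (s := a (m + 3)) (t := a (m + 4)) (u := a (m + 1))
      (by rw [hrec]; ring) c24 c12.symm
  have c35 : IsCoprime (a (m + 3)) (a (m + 5)) :=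
    IsCoprime.of_mul_eq_add_mul (s := a (m + 2)) (t := a (m + 4)) (u := a (m + 1))
      (by rw [hrec]; ring) c34 c13.symm
  have c45 : IsCoprime (a (m + 4)) (a (m + 5)) :=
    IsCoprime.of_mul_eq_add_mul hrec c34.symm c24.symm
  exact ⟨c23, c24, c25, c34, c35, c45⟩

theorem windowCoprime_of_recurrence
    (hrec : ∀ m, a (m + 5) * a m = a (m + 4) * a (m + 1) + a (m + 3) * a (m + 2))
    (h₁ : WindowCoprime a 1) (m : ℕ) : WindowCoprime a (m + 1) := by
  induction m with
  | zero => exact h₁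
  | succ m ih => exact ih.succ (hrec m)

theorem WindowCoprime.isCoprime_mul {m : ℕ} (h : WindowCoprime a m) :
    IsCoprime (a (m + 3) * a m) (a (m + 2) * a (m + 1)) := by
  obtain ⟨c01, c02, -, -, c13, c23⟩ := h
  exact (c23.symm.mul_right c13.symm).mul_left (c02.mul_right c01)

end Window

theorem stmt14_general (a : ℕ → ℤ) (hinit : ∀ i ≤ 4, a i = 1)
    (hrec : ∀ m ≥ 5, a m * a (m - 5) = a (m - 1) * a (m - 4) + a (m - 2) * a (m - 3)) :
    ∀ n ≥ 5, Int.gcd (a n * a (n - 3)) (a (n - 1) * a (n - 2)) = 1 := by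
  intro n hn
  have hrec' (m : ℕ) : a (m + 5) * a m = a (m + 4) * a (m + 1) + a (m + 3) * a (m + 2) := by
    simpa using hrec (m + 5) (by omega)
  have h₁ : WindowCoprime a 1 := by
    simp only [WindowCoprime, Nat.reduceAdd, hinit 1 (by norm_num), hinit 2 (by norm_num),
      hinit 3 (by norm_num), hinit 4 le_rfl, isCoprime_one_left, and_self]
  obtain ⟨k, rfl⟩ : ∃ k, n = k + 2 + 3 := ⟨n - 5, by omega⟩
  have hcop := (windowCoprime_of_recurrence hrec' h₁ (k + 1)).isCoprime_mul
  rw [← Int.isCoprime_iff_gcd_eq_one]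
  simpa using hcop

theorem stmt14 (a : ℕ → ℤ) (hpos : ∀ n, 0 < a n) (hinit : ∀ i ≤ 4, a i = 1)
    (hrec : ∀ m ≥ 5, a m * a (m - 5) = a (m - 1) * a (m - 4) + a (m - 2) * a (m - 3)) :
    ∀ n ≥ 5, Int.gcd (a n * a (n - 3)) (a (n - 1) * a (n - 2)) = 1 :=
  stmt14_general a hinit hrec
end

section
/- Every term of the Somos-5 sequence is a positive integer, and consecutive terms are strictly increasing from index 4 onward (a_4 < a_5 < a_6 < ...). -/
def somos5 : ℕ → ℚ
  | 0 => 1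
  | 1 => 1
  | 2 => 1
  | 3 => 1
  | 4 => 1
  | n + 5 => (somos5 (n + 4) * somos5 (n + 1) + somos5 (n + 3) * somos5 (n + 2)) / somos5 n

/-!
Positivity is immediate from the recurrence, and monotonicity follows from it: once
`a n ≤ a (n + 1)`, the recurrence gives
`a (n + 5) * a n > a (n + 4) * a (n + 1) ≥ a (n + 4) * a n`.

Integrality rests on the companion relation
`a (n + 4) * a n + a (n + 2) ^ 2 = c n * a (n + 3) * a (n + 1)`, with `c n` equal to `2` or `3`
according to the parity of `n`: a period-two invariant of the recurrence, checked on the initial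
terms and carried along by the recurrence. Combining it with the recurrence shows that `a (n + 2)`
divides `c n * a (n + 5) * a (n + 3) - a (n + 4) ^ 2` as soon as `a n` and `a (n + 2)` are coprime
integers, so the companion relation at `n + 2` produces the next term as an integer. The recurrence,
read as `a (n + 6) * a (n + 1) = a (n + 5) * a (n + 2) + a (n + 4) * a (n + 3)`, then shows that the
new term is coprime to its two predecessors.
-/

section CommRing

variable {R : Type*} [CommRing R]

theorem isCoprime_of_mul_eq_add {a b x y z : R} (h : b * x = a * y + z) (hz : IsCoprime z a) :
    IsCoprime a b := by
  obtain ⟨m, k, hmk⟩ := hz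
  exact ⟨k - m * y, m * x, by linear_combination hmk + m * h⟩

theorem dvd_of_isCoprime_of_somos_relations {c p q r s t u : R} (hpr : IsCoprime p r)
    (h5 : u * p = t * q + s * r) (h4 : t * p = c * (s * q) - r ^ 2) :
    r ∣ c * (u * s) - t ^ 2 := by
  have key : (c * (u * s) - t ^ 2) * p ^ 2 = r * (c * (s * q * r) + c * (s ^ 2 * p) - r ^ 3) := by
    linear_combination (c * s * p) * h5 + (r ^ 2 - t * p) * h4
  exact hpr.pow_left.symm.dvd_of_dvd_mul_right ⟨_, key⟩

end CommRing

theorem somos5_pos : ∀ n, 0 < somos5 n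
  | 0 | 1 | 2 | 3 | 4 => by norm_num [somos5]
  | n + 5 => by
    have := somos5_pos n
    have := somos5_pos (n + 1)
    have := somos5_pos (n + 2)
    have := somos5_pos (n + 3)
    have := somos5_pos (n + 4)
    rw [somos5]
    positivity

theorem somos5_mul (n : ℕ) :
    somos5 (n + 5) * somos5 n =
      somos5 (n + 4) * somos5 (n + 1) + somos5 (n + 3) * somos5 (n + 2) := by
  rw [somos5, div_mul_cancel₀ _ (somos5_pos n).ne']

def somos5Coeff (n : ℕ) : ℤ := if Even n then 2 else 3

theorem somos5Coeff_add_two (n : ℕ) : somos5Coeff (n + 2) = somos5Coeff n := by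
  simp [somos5Coeff, Nat.even_add]

theorem somos5_companion : ∀ n, somos5 (n + 4) * somos5 n + somos5 (n + 2) ^ 2 =
    somos5Coeff n * (somos5 (n + 3) * somos5 (n + 1))
  | 0 | 1 => by norm_num [somos5, somos5Coeff]
  | n + 2 => by
    have h0 := somos5_mul n
    have h1 := somos5_mul (n + 1)
    have ih := somos5_companion n
    simp only [add_assoc, Nat.reduceAdd] at h1 ⊢
    rw [somos5Coeff_add_two]
    have hne : somos5 n * somos5 (n + 1) ≠ 0 := (mul_pos (somos5_pos n) (somos5_pos (n + 1))).ne'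
    refine mul_right_cancel₀ hne ?_
    linear_combination (somos5 n * somos5 (n + 2)) * h1 + (somos5 n * somos5 (n + 5)) * ih
      - (somos5 n * somos5 (n + 4)) * h0

theorem somos5_window (n : ℕ) : ∃ p q r s t u : ℤ,
    somos5 n = p ∧ somos5 (n + 1) = q ∧ somos5 (n + 2) = r ∧ somos5 (n + 3) = s ∧
    somos5 (n + 4) = t ∧ somos5 (n + 5) = u ∧
    IsCoprime p r ∧ IsCoprime q s ∧ IsCoprime r t ∧ IsCoprime s u ∧ IsCoprime t u := by
  induction n with
  | zero => exact ⟨1, 1, 1, 1, 1, 2, by norm_num [somos5]⟩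
  | succ n ih =>
    obtain ⟨p, q, r, s, t, u, hp, hq, hr, hs, ht, hu, hpr, hqs, hrt, hsu, htu⟩ := ih
    have h5 : u * p = t * q + s * r := by
      have := somos5_mul n
      rw [hp, hq, hr, hs, ht, hu] at this
      exact_mod_cast this
    have h4 : t * p = somos5Coeff n * (s * q) - r ^ 2 := by
      have := somos5_companion n
      rw [hp, hq, hr, hs, ht] at this
      rw [eq_sub_iff_add_eq]
      exact_mod_cast this
    obtain ⟨v, hv⟩ := dvd_of_isCoprime_of_somos_relations hpr h5 h4
    have h6 : somos5 (n + 6) = v := by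
      have := somos5_companion (n + 2)
      simp only [add_assoc, Nat.reduceAdd] at this
      rw [somos5Coeff_add_two, hr, hs, ht, hu, ← eq_sub_iff_add_eq] at this
      have hr0 : (r : ℚ) ≠ 0 := hr ▸ (somos5_pos (n + 2)).ne'
      refine mul_right_cancel₀ hr0 (this.trans ?_)
      exact_mod_cast hv.trans (mul_comm r v)
    have h5' : v * q = u * r + t * s := by
      have := somos5_mul (n + 1)
      simp only [add_assoc, Nat.reduceAdd] at this
      rw [hq, hr, hs, ht, hu, h6] at this
      exact_mod_cast this
    have htv : IsCoprime t v :=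
      isCoprime_of_mul_eq_add (by linear_combination h5' : v * q = t * s + u * r)
        (htu.symm.mul_left hrt)
    have huv : IsCoprime u v := isCoprime_of_mul_eq_add h5' (htu.mul_left hsu)
    exact ⟨q, r, s, t, u, v, hq, hr, hs, ht, hu, h6, hqs, hrt, hsu, htv, huv⟩

theorem somos5_lt_of_le {n : ℕ} (h : somos5 n ≤ somos5 (n + 1)) :
    somos5 (n + 4) < somos5 (n + 5) := by
  have key : somos5 (n + 4) * somos5 n < somos5 (n + 5) * somos5 n :=
    calc somos5 (n + 4) * somos5 n
        ≤ somos5 (n + 4) * somos5 (n + 1) := mul_le_mul_of_nonneg_left h (somos5_pos _).le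
      _ < somos5 (n + 4) * somos5 (n + 1) + somos5 (n + 3) * somos5 (n + 2) :=
        lt_add_of_pos_right _ (mul_pos (somos5_pos _) (somos5_pos _))
      _ = somos5 (n + 5) * somos5 n := (somos5_mul n).symm
  exact lt_of_mul_lt_mul_right key (somos5_pos n).le

theorem somos5_le_succ : ∀ n, somos5 n ≤ somos5 (n + 1)
  | 0 | 1 | 2 | 3 => by norm_num [somos5]
  | n + 4 => (somos5_lt_of_le (somos5_le_succ n)).le

theorem stmt17 : (∀ n : ℕ, ∃ k : ℕ, 0 < k ∧ somos5 n = (k : ℚ)) ∧ ∀ n ≥ 4, somos5 n < somos5 (n + 1) := by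
  refine ⟨fun n => ?_, fun n hn => ?_⟩
  · obtain ⟨p, -, -, -, -, -, hp, -⟩ := somos5_window n
    have hp0 : 0 < p := by exact_mod_cast hp ▸ somos5_pos n
    lift p to ℕ using hp0.le
    exact ⟨p, by exact_mod_cast hp0, by exact_mod_cast hp⟩
  · obtain ⟨k, rfl⟩ := Nat.exists_eq_add_of_le' hn
    exact somos5_lt_of_le (somos5_le_succ k)
end
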